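/- arXiv:2001.07806 — 2 statements merged into one kernel-verified Lean document; each statement's English description precedes it below -/
import Mathlib

section
/- Let A be an n×n matrix over the max-plus semiring with Tr(A) = max(tr A, …, tr Aⁿ) ≤ 0, and let A* = I ⊕ A ⊕ ⋯ ⊕ A^{n-1}. Then for every vector u ∈ (ℝ∪{-∞})ⁿ, the vector x = A*u satisfies A x ≤ x; moreover, if u is regular (all entries finite), then x is regular. -/
noncomputable section

/-- The max-plus carrier: ℝ ∪ {-∞}, with ⊥ playing the role of -∞. -/
abbrev MP := WithBot ℝ

/-- Max-plus matrix product: (A⊗B)_ik = max_j (a_ij + b_jk). -/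
def mpMul {m n p : ℕ} (A : Matrix (Fin m) (Fin n) MP) (B : Matrix (Fin n) (Fin p) MP) :
    Matrix (Fin m) (Fin p) MP :=
  fun i k => Finset.univ.sup fun j => A i j + B j k

/-- Max-plus matrix-vector product: (Ax)_i = max_j (a_ij + x_j). -/
def mpMulVec {m n : ℕ} (A : Matrix (Fin m) (Fin n) MP) (x : Fin n → MP) : Fin m → MP :=
  fun i => Finset.univ.sup fun j => A i j + x j

/-- Conjugate (multiplicative inverse transpose): (A⁻)_ij = -a_ji if a_ji ≠ -∞, else -∞. -/
def mpConj {m n : ℕ} (A : Matrix (Fin m) (Fin n) MP) : Matrix (Fin n) (Fin m) MP :=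
  fun i j => (A j i).map fun r => -r

/-- Tropical identity matrix: 0 on the diagonal, -∞ elsewhere. -/
def mpId (n : ℕ) : Matrix (Fin n) (Fin n) MP :=
  fun i j => if i = j then (0 : MP) else ⊥

/-- Tropical matrix powers, A⁰ = I. -/
def mpPow {n : ℕ} (A : Matrix (Fin n) (Fin n) MP) : ℕ → Matrix (Fin n) (Fin n) MP
  | 0 => mpId n
  | k + 1 => mpMul A (mpPow A k)

/-- Tropical trace: tr A = max_i a_ii. -/
def mpTr {n : ℕ} (A : Matrix (Fin n) (Fin n) MP) : MP :=
  Finset.univ.sup fun i => A i i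

/-- Tr(A) = tr A ⊕ tr A² ⊕ ⋯ ⊕ tr Aⁿ. -/
def mpTrFun {n : ℕ} (A : Matrix (Fin n) (Fin n) MP) : MP :=
  (Finset.Icc 1 n).sup fun k => mpTr (mpPow A k)

/-- Bounded Kleene star: A* = I ⊕ A ⊕ ⋯ ⊕ A^{n-1}. -/
def mpStar {n : ℕ} (A : Matrix (Fin n) (Fin n) MP) : Matrix (Fin n) (Fin n) MP :=
  fun i j => (Finset.range n).sup fun k => mpPow A k i j

/-- Entrywise max of matrices: A ⊕ B. -/
def mpAdd {m n : ℕ} (A B : Matrix (Fin m) (Fin n) MP) : Matrix (Fin m) (Fin n) MP :=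
  fun i j => A i j ⊔ B i j

/-- Strictly row-monomial: exactly one entry ≠ -∞ in each row. -/
def RowMonomial {m n : ℕ} (A : Matrix (Fin m) (Fin n) MP) : Prop :=
  ∀ i, ∃! j, A i j ≠ ⊥

/-- Row-regular: at least one entry ≠ -∞ in each row. -/
def RowRegular {m n : ℕ} (A : Matrix (Fin m) (Fin n) MP) : Prop :=
  ∀ i, ∃ j, A i j ≠ ⊥

/-- Regular vector: all entries finite. -/
def Regular {n : ℕ} (x : Fin n → MP) : Prop := ∀ j, x j ≠ ⊥

/-! A walk of length `n` visits `n + 1` vertices, so some vertex repeats; the closed subwalk between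
the two visits has length between `1` and `n`, hence weight at most `Tr(A) ≤ 0`, and cutting it out
leaves a walk of length `< n` between the same endpoints that is at least as heavy. Since `A^k` is
the maximal weight of a walk of length `k`, this gives `Aⁿ ≤ A*`, hence `A ⊗ A* ≤ A*`, and
`A (A* u) = (A ⊗ A*) u ≤ A* u`. Regularity of `A* u` comes from `A* ≥ I`, i.e. `A* u ≥ u`. -/

open Finset

namespace WithBot

variable {α ι : Type*} [Add α] [LinearOrder α]

theorem add_finset_sup [AddLeftMono α] (a : WithBot α) (s : Finset ι) (f : ι → WithBot α) :
    a + s.sup f = s.sup fun i => a + f i :=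
  apply_sup_eq_sup_comp_of_linearOrder (a + ·) (fun _ _ h => add_le_add_right h a) (add_bot a)

theorem finset_sup_add [AddRightMono α] (s : Finset ι) (f : ι → WithBot α) (a : WithBot α) :
    s.sup f + a = s.sup fun i => f i + a :=
  apply_sup_eq_sup_comp_of_linearOrder (· + a) (fun _ _ h => add_le_add_left h a) (bot_add a)

end WithBot

theorem mpMulVec_mpMulVec {m n p : ℕ} (A : Matrix (Fin m) (Fin n) MP)
    (B : Matrix (Fin n) (Fin p) MP) (u : Fin p → MP) :
    mpMulVec A (mpMulVec B u) = mpMulVec (mpMul A B) u := by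
  funext i
  simp only [mpMulVec, mpMul, WithBot.add_finset_sup, WithBot.finset_sup_add, add_assoc]
  exact Finset.sup_comm _ _ _

theorem mpMulVec_mono_left {m n : ℕ} {A B : Matrix (Fin m) (Fin n) MP}
    (hAB : ∀ i j, A i j ≤ B i j) (u : Fin n → MP) (i : Fin m) :
    mpMulVec A u i ≤ mpMulVec B u i :=
  sup_mono_fun fun j _ => add_le_add_left (hAB i j) (u j)

theorem le_mpMulVec_of_nonneg {n : ℕ} {A : Matrix (Fin n) (Fin n) MP} {i : Fin n}
    (hA : 0 ≤ A i i) (u : Fin n → MP) : u i ≤ mpMulVec A u i :=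
  calc u i = 0 + u i := (zero_add _).symm
    _ ≤ A i i + u i := add_le_add_left hA (u i)
    _ ≤ mpMulVec A u i := le_sup (f := fun j => A i j + u j) (mem_univ i)

section Powers

variable {n : ℕ} (A : Matrix (Fin n) (Fin n) MP)

theorem mpPow_zero_apply_self (i : Fin n) : mpPow A 0 i i = 0 := by
  simp [mpPow, mpId]

theorem mpPow_succ_apply (k : ℕ) (i j : Fin n) :
    mpPow A (k + 1) i j = univ.sup fun m => A i m + mpPow A k m j :=
  rfl

theorem add_mpPow_le_mpPow_succ (k : ℕ) (i m j : Fin n) :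
    A i m + mpPow A k m j ≤ mpPow A (k + 1) i j :=
  le_sup (f := fun m => A i m + mpPow A k m j) (mem_univ m)

theorem mpPow_add_le (a b : ℕ) (i l j : Fin n) :
    mpPow A a i l + mpPow A b l j ≤ mpPow A (a + b) i j := by
  induction a generalizing i with
  | zero =>
    by_cases hil : i = l <;> simp [mpPow, mpId, hil]
  | succ a ih =>
    rw [mpPow_succ_apply, WithBot.finset_sup_add, Nat.succ_add]
    refine Finset.sup_le fun m _ => ?_
    calc A i m + mpPow A a m l + mpPow A b l j
        = A i m + (mpPow A a m l + mpPow A b l j) := add_assoc _ _ _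
      _ ≤ A i m + mpPow A (a + b) m j := add_le_add_right (ih m) _
      _ ≤ mpPow A (a + b + 1) i j := add_mpPow_le_mpPow_succ A _ i m j

theorem mpPow_apply_self_le_mpTrFun {k : ℕ} (hk₁ : 1 ≤ k) (hkn : k ≤ n) (i : Fin n) :
    mpPow A k i i ≤ mpTrFun A :=
  (le_sup (f := fun i => mpPow A k i i) (mem_univ i)).trans
    (le_sup (f := fun k => mpTr (mpPow A k)) (mem_Icc.2 ⟨hk₁, hkn⟩))

def mpWalkWeight (p : ℕ → Fin n) (k : ℕ) : MP :=
  ∑ t ∈ range k, A (p t) (p (t + 1))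

theorem mpWalkWeight_succ (p : ℕ → Fin n) (k : ℕ) :
    mpWalkWeight A p (k + 1) = A (p 0) (p 1) + mpWalkWeight A (fun t => p (t + 1)) k := by
  rw [mpWalkWeight, sum_range_succ', add_comm]
  rfl

theorem mpWalkWeight_add (p : ℕ → Fin n) (a b : ℕ) :
    mpWalkWeight A p (a + b) = mpWalkWeight A p a + mpWalkWeight A (fun t => p (a + t)) b := by
  rw [mpWalkWeight, sum_range_add]
  rfl

theorem mpWalkWeight_eq_add_add (p : ℕ → Fin n) {s t k : ℕ} (hst : s ≤ t) (htk : t ≤ k) :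
    mpWalkWeight A p k = mpWalkWeight A p s + (mpWalkWeight A (fun v => p (s + v)) (t - s)
      + mpWalkWeight A (fun v => p (t + v)) (k - t)) := by
  obtain ⟨a, rfl⟩ := Nat.exists_eq_add_of_le hst
  obtain ⟨b, rfl⟩ := Nat.exists_eq_add_of_le htk
  rw [Nat.add_sub_cancel_left, Nat.add_sub_cancel_left]
  simp only [mpWalkWeight_add, add_assoc]

theorem mpWalkWeight_le_mpPow (p : ℕ → Fin n) (k : ℕ) {i j : Fin n} (hi : p 0 = i)
    (hj : p k = j) : mpWalkWeight A p k ≤ mpPow A k i j := by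
  subst hi hj
  induction k generalizing p with
  | zero => simp [mpWalkWeight, mpPow_zero_apply_self]
  | succ k ih =>
    rw [mpWalkWeight_succ]
    calc A (p 0) (p 1) + mpWalkWeight A (fun t => p (t + 1)) k
        ≤ A (p 0) (p 1) + mpPow A k (p 1) (p (k + 1)) :=
          add_le_add_right (ih fun t => p (t + 1)) _
      _ ≤ mpPow A (k + 1) (p 0) (p (k + 1)) := add_mpPow_le_mpPow_succ A k _ _ _

theorem exists_walk_of_mpPow_ne_bot (k : ℕ) {i j : Fin n} (hk : mpPow A k i j ≠ ⊥) :
    ∃ p : ℕ → Fin n, p 0 = i ∧ p k = j ∧ mpPow A k i j ≤ mpWalkWeight A p k := by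
  induction k generalizing i with
  | zero =>
    have hij : i = j := by
      by_contra hij
      simp [mpPow, mpId, hij] at hk
    exact ⟨fun _ => i, rfl, hij, by simp [mpWalkWeight, hij, mpPow_zero_apply_self]⟩
  | succ k ih =>
    obtain ⟨m, -, hm⟩ := exists_mem_eq_sup univ ⟨i, mem_univ i⟩ fun m => A i m + mpPow A k m j
    rw [mpPow_succ_apply, hm] at hk ⊢
    obtain ⟨p, hp₀, hpk, hp⟩ := ih (WithBot.add_ne_bot.1 hk).2
    refine ⟨fun t => Nat.casesOn t i p, rfl, hpk, ?_⟩
    rw [mpWalkWeight_succ]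
    exact hp₀ ▸ add_le_add_right hp (A i m)

theorem exists_lt_le_apply_eq (p : ℕ → Fin n) : ∃ s t, s < t ∧ t ≤ n ∧ p s = p t := by
  obtain ⟨a, b, hab, hp⟩ :=
    Fintype.exists_ne_map_eq_of_card_lt (fun t : Fin (n + 1) => p t) (by simp)
  rcases Fin.lt_or_lt_of_ne hab with hlt | hlt
  · exact ⟨a, b, hlt, Nat.lt_succ_iff.1 b.isLt, hp⟩
  · exact ⟨b, a, hlt, Nat.lt_succ_iff.1 a.isLt, hp.symm⟩

variable {A}

theorem mpPow_le_mpStar_of_mpTrFun_nonpos (h : mpTrFun A ≤ 0) {k : ℕ} (hk : k ≤ n)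
    (i j : Fin n) : mpPow A k i j ≤ mpStar A i j := by
  rcases hk.lt_or_eq with hk | rfl
  · exact le_sup (f := fun k => mpPow A k i j) (mem_range.2 hk)
  by_cases hb : mpPow A k i j = ⊥
  · exact hb ▸ bot_le
  obtain ⟨p, hp₀, hpk, hp⟩ := exists_walk_of_mpPow_ne_bot A k hb
  obtain ⟨s, t, hst, htk, hps⟩ := exists_lt_le_apply_eq p
  have hcycle : mpWalkWeight A (fun v => p (s + v)) (t - s) ≤ 0 :=
    (mpWalkWeight_le_mpPow A _ _ (i := p s) (j := p s) (by simp)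
      (by simp [hps, Nat.add_sub_cancel' hst.le])).trans
      ((mpPow_apply_self_le_mpTrFun A (by omega) (by omega) _).trans h)
  calc mpPow A k i j ≤ mpWalkWeight A p k := hp
    _ = mpWalkWeight A p s + (mpWalkWeight A (fun v => p (s + v)) (t - s)
          + mpWalkWeight A (fun v => p (t + v)) (k - t)) :=
      mpWalkWeight_eq_add_add A p hst.le htk
    _ ≤ mpWalkWeight A p s + mpWalkWeight A (fun v => p (t + v)) (k - t) :=
      add_le_add_right (add_le_of_nonpos_left hcycle) _
    _ ≤ mpPow A s i (p t) + mpPow A (k - t) (p t) j :=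
      add_le_add (mpWalkWeight_le_mpPow A _ _ hp₀ hps)
        (mpWalkWeight_le_mpPow A _ _ (by simp) (by simp [Nat.add_sub_cancel' htk, hpk]))
    _ ≤ mpPow A (s + (k - t)) i j := mpPow_add_le A _ _ _ _ _
    _ ≤ mpStar A i j := le_sup (f := fun k => mpPow A k i j) (mem_range.2 (by omega))

theorem mpMul_mpStar_le_mpStar (h : mpTrFun A ≤ 0) (i j : Fin n) :
    mpMul A (mpStar A) i j ≤ mpStar A i j :=
  Finset.sup_le fun m _ => by
    change A i m + (range n).sup (fun k => mpPow A k m j) ≤ _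
    rw [WithBot.add_finset_sup]
    exact Finset.sup_le fun k hk => (add_mpPow_le_mpPow_succ A k i m j).trans
      (mpPow_le_mpStar_of_mpTrFun_nonpos h (mem_range.1 hk) i j)

theorem mpStar_apply_self_nonneg (i : Fin n) : 0 ≤ mpStar A i i :=
  mpPow_zero_apply_self A i ▸ le_sup (f := fun k => mpPow A k i i) (mem_range.2 i.pos)

end Powers

theorem stmt6 {n : ℕ} (A : Matrix (Fin n) (Fin n) MP) (h : mpTrFun A ≤ 0) (u : Fin n → MP) :
    (∀ i, mpMulVec A (mpMulVec (mpStar A) u) i ≤ mpMulVec (mpStar A) u i) ∧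
      (Regular u → Regular (mpMulVec (mpStar A) u)) := by
  refine ⟨fun i => ?_, fun hu i hx => ?_⟩
  · rw [mpMulVec_mpMulVec]
    exact mpMulVec_mono_left (mpMul_mpStar_le_mpStar h) u i
  · exact hu i (le_bot_iff.1 (hx ▸ le_mpMulVec_of_nonneg (mpStar_apply_self_nonneg i) u))
end
end

section
/- Let A, B be m×n matrices over the max-plus semiring with m rows, and let x be a regular solution of Ax ≤ Bx with B row-regular. Then there exists a strictly row-monomial matrix G, obtained from B by keeping in each row i exactly one entry b_{i,q(i)} ≠ -∞, such that x satisfies x ≥ G⁻(A ⊕ B)x; in particular H = G⁻(A ⊕ B) satisfies Hx ≤ x and hence max(tr H, …, tr Hⁿ) ≤ 0. -/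
noncomputable section

/-!
Pick in each row `i` an index `q i` at which `b_ij + x_j` attains `(Bx)_i`, and let `G` keep only
the entries `b_{i,q(i)}`. Conjugation residuates: `G⁻y ≤ x` as soon as `y_i ≤ b_{i,q(i)} + x_{q(i)}`
for every row `i`, and for `y = (A ⊕ B)x = Ax ⊕ Bx = Bx` this is the choice of `q`. Then `Hx ≤ x`
for `H = G⁻(A ⊕ B)`, so `Hᵏx ≤ x` for every `k`; since `x` is finite, reading this at the
coordinate `j` gives `(Hᵏ)_jj ≤ 0`, whence every trace is `≤ 0`.
-/

lemma mp_sup_add {ι : Type*} (s : Finset ι) (f : ι → MP) (c : MP) :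
    s.sup f + c = s.sup fun a => f a + c :=
  Finset.apply_sup_eq_sup_comp (· + c) (fun a b => (max_add_add_right a b c).symm)
    (WithBot.bot_add c)

lemma mp_add_sup {ι : Type*} (s : Finset ι) (f : ι → MP) (c : MP) :
    c + s.sup f = s.sup fun a => c + f a :=
  Finset.apply_sup_eq_sup_comp (c + ·) (fun a b => (max_add_add_left c a b).symm)
    (WithBot.add_bot c)

lemma mp_neg_add_cancel_left (b : ℝ) (y : MP) : ((-b : ℝ) : MP) + ((b : MP) + y) = y := by
  rw [← add_assoc, ← WithBot.coe_add, neg_add_cancel, WithBot.coe_zero, zero_add]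

section MaxPlusMatrix

variable {m n p : ℕ}

lemma mpMulVec_mpMul (P : Matrix (Fin m) (Fin n) MP) (Q : Matrix (Fin n) (Fin p) MP)
    (x : Fin p → MP) (i : Fin m) :
    mpMulVec (mpMul P Q) x i = mpMulVec P (mpMulVec Q x) i := by
  simp only [mpMulVec, mpMul, mp_sup_add, mp_add_sup, add_assoc]
  exact Finset.sup_comm _ _ _

lemma mpMulVec_mono (P : Matrix (Fin m) (Fin n) MP) {x y : Fin n → MP} (hxy : ∀ j, x j ≤ y j)
    (i : Fin m) : mpMulVec P x i ≤ mpMulVec P y i :=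
  Finset.sup_mono_fun fun j _ => add_le_add_right (hxy j) _

lemma mpMulVec_mpId (x : Fin n → MP) (i : Fin n) : mpMulVec (mpId n) x i = x i := by
  refine le_antisymm (Finset.sup_le fun j _ => ?_) ?_
  · by_cases hij : i = j <;> simp [mpId, hij]
  · simpa [mpMulVec, mpId] using
      Finset.le_sup (f := fun j => mpId n i j + x j) (Finset.mem_univ i)

lemma mpMulVec_mpAdd (A B : Matrix (Fin m) (Fin n) MP) (x : Fin n → MP) (i : Fin m) :
    mpMulVec (mpAdd A B) x i = mpMulVec A x i ⊔ mpMulVec B x i := by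
  simp only [mpMulVec, mpAdd, ← max_add_add_right, ← Finset.sup_sup]
  rfl

lemma exists_mpMulVec_eq_add {B : Matrix (Fin m) (Fin n) MP} (hB : RowRegular B)
    {x : Fin n → MP} (hx : Regular x) (i : Fin m) :
    ∃ q, B i q ≠ ⊥ ∧ mpMulVec B x i = B i q + x q := by
  obtain ⟨j, hj⟩ := hB i
  obtain ⟨q, -, hq⟩ := Finset.exists_mem_eq_sup Finset.univ ⟨j, Finset.mem_univ j⟩
    fun j => B i j + x j
  refine ⟨q, fun hbot => ?_, hq⟩
  have hle : B i j + x j ≤ B i q + x q :=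
    hq ▸ Finset.le_sup (f := fun j => B i j + x j) (Finset.mem_univ j)
  rw [hbot, WithBot.bot_add, le_bot_iff, WithBot.add_eq_bot] at hle
  exact hle.elim hj (hx j)

lemma mpMulVec_mpConj_le {G : Matrix (Fin m) (Fin n) MP} {y : Fin m → MP} {x : Fin n → MP}
    (h : ∀ i j, G i j ≠ ⊥ → y i ≤ G i j + x j) (j : Fin n) : mpMulVec (mpConj G) y j ≤ x j := by
  refine Finset.sup_le fun i _ => ?_
  cases hg : G i j using WithBot.recBotCoe with
  | bot => simp [mpConj, hg]
  | coe b =>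
    have hy := h i j (by simp [hg])
    rw [hg] at hy
    calc mpConj G j i + y i = ((-b : ℝ) : MP) + y i := by simp [mpConj, hg]
      _ ≤ ((-b : ℝ) : MP) + ((b : MP) + x j) := add_le_add_right hy _
      _ = x j := mp_neg_add_cancel_left b (x j)

end MaxPlusMatrix

section Trace

variable {n : ℕ} {H : Matrix (Fin n) (Fin n) MP} {x : Fin n → MP}

lemma mpMulVec_mpPow_le (hHx : ∀ j, mpMulVec H x j ≤ x j) (k : ℕ) (j : Fin n) :
    mpMulVec (mpPow H k) x j ≤ x j := by
  induction k generalizing j with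
  | zero => exact (mpMulVec_mpId x j).le
  | succ k ih =>
    rw [mpPow, mpMulVec_mpMul]
    exact (mpMulVec_mono H ih j).trans (hHx j)

lemma mpTr_nonpos_of_mpMulVec_le (hx : Regular x) (hHx : ∀ j, mpMulVec H x j ≤ x j) :
    mpTr H ≤ 0 := by
  refine Finset.sup_le fun j _ => ?_
  have hjj : H j j + x j ≤ 0 + x j := by
    rw [zero_add]
    exact (Finset.le_sup (f := fun i => H j i + x i) (Finset.mem_univ j)).trans (hHx j)
  exact WithBot.le_of_add_le_add_right (hx j) hjj

lemma mpTrFun_nonpos_of_mpMulVec_le (hx : Regular x) (hHx : ∀ j, mpMulVec H x j ≤ x j) :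
    mpTrFun H ≤ 0 :=
  Finset.sup_le fun k _ => mpTr_nonpos_of_mpMulVec_le hx (mpMulVec_mpPow_le hHx k)

end Trace

def selectInRows {m n : ℕ} (B : Matrix (Fin m) (Fin n) MP) (q : Fin m → Fin n) :
    Matrix (Fin m) (Fin n) MP :=
  fun i j => if j = q i then B i j else ⊥

section SelectInRows

variable {m n : ℕ} {B : Matrix (Fin m) (Fin n) MP} {q : Fin m → Fin n}

lemma eq_of_selectInRows_ne_bot {i : Fin m} {j : Fin n} (h : selectInRows B q i j ≠ ⊥) :
    j = q i := by
  by_contra hj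
  exact h (if_neg hj)

lemma selectInRows_of_ne_bot {i : Fin m} {j : Fin n} (h : selectInRows B q i j ≠ ⊥) :
    selectInRows B q i j = B i j :=
  if_pos (eq_of_selectInRows_ne_bot h)

lemma rowMonomial_selectInRows (hq : ∀ i, B i (q i) ≠ ⊥) : RowMonomial (selectInRows B q) :=
  fun i => ⟨q i, by simpa [selectInRows] using hq i, fun _ hj => eq_of_selectInRows_ne_bot hj⟩

end SelectInRows

theorem stmt14 {m n : ℕ} (A B : Matrix (Fin m) (Fin n) MP) (hB : RowRegular B)
    (x : Fin n → MP) (hx : Regular x)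
    (h : ∀ i, mpMulVec A x i ≤ mpMulVec B x i) :
    ∃ G : Matrix (Fin m) (Fin n) MP, RowMonomial G ∧
      (∀ i j, G i j ≠ ⊥ → G i j = B i j) ∧
      (∀ j, mpMulVec (mpMul (mpConj G) (mpAdd A B)) x j ≤ x j) ∧
      mpTrFun (mpMul (mpConj G) (mpAdd A B)) ≤ 0 := by
  choose q hq_ne_bot hq_attains using exists_mpMulVec_eq_add hB hx
  have hHx : ∀ j, mpMulVec (mpMul (mpConj (selectInRows B q)) (mpAdd A B)) x j ≤ x j := by
    intro j
    rw [mpMulVec_mpMul]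
    refine mpMulVec_mpConj_le (fun i k hik => ?_) j
    rw [selectInRows_of_ne_bot hik, eq_of_selectInRows_ne_bot hik, mpMulVec_mpAdd, ← hq_attains]
    exact sup_le (h i) le_rfl
  exact ⟨selectInRows B q, rowMonomial_selectInRows hq_ne_bot,
    fun _ _ => selectInRows_of_ne_bot, hHx, mpTrFun_nonpos_of_mpMulVec_le hx hHx⟩
end
end
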